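/- arXiv:2104.07592 — 3 statements merged into one kernel-verified Lean document; each statement's English description precedes it below -/
import Mathlib

section
/- Let α : ℝ → ℝ be a locally Lipschitz extended class-K function (continuous, strictly increasing, and α(0) = 0), let T > 0, and let y : [0, T] → ℝ be differentiable with y′(t) ≥ −α(y(t)) for all t ∈ [0, T]. If y(0) ≥ 0, then y(t) ≥ 0 for all t ∈ [0, T]. -/
/-! Below zero the hypothesis gives `y' ≥ -α(y) > 0`, so `y` can never reach a negative level
`-ε` from above: this is a fencing argument with the constant barrier `-ε`, for every `ε > 0`. -/

open Set

theorem nonneg_of_deriv_right_pos_of_neg {y y' : ℝ → ℝ} {a b : ℝ}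
    (hy : ContinuousOn y (Icc a b)) (hy' : ∀ x ∈ Ico a b, HasDerivWithinAt y (y' x) (Ici x) x)
    (hpos : ∀ x ∈ Ico a b, y x < 0 → 0 < y' x) (ha : 0 ≤ y a) :
    ∀ ⦃x⦄, x ∈ Icc a b → 0 ≤ y x := by
  intro x hx
  have hfence : ∀ ε > 0, -y x ≤ ε := fun ε hε =>
    image_le_of_deriv_right_lt_deriv_boundary (B := fun _ => ε) (B' := fun _ => 0) hy.neg
      (fun t ht => (hy' t ht).neg) (by simp only [Pi.neg_apply]; linarith)
      (fun _ => hasDerivAt_const _ _)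
      (fun t ht hyt => neg_lt_zero.2 (hpos t ht (by rw [Pi.neg_apply] at hyt; linarith))) hx
  exact le_of_forall_pos_le_add fun ε hε => by linarith [hfence ε hε]

theorem stmt10_general (α : ℝ → ℝ) (hαm : StrictMono α) (hα0 : α 0 = 0)
    (T : ℝ) (y y' : ℝ → ℝ)
    (hderiv : ∀ t ∈ Set.Icc (0 : ℝ) T, HasDerivAt y (y' t) t)
    (hineq : ∀ t ∈ Set.Icc (0 : ℝ) T, -α (y t) ≤ y' t)
    (hy0 : 0 ≤ y 0) :
    ∀ t ∈ Set.Icc (0 : ℝ) T, 0 ≤ y t := by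
  intro t ht
  refine nonneg_of_deriv_right_pos_of_neg
    (fun s hs => (hderiv s hs).continuousAt.continuousWithinAt)
    (fun s hs => (hderiv s (Ico_subset_Icc_self hs)).hasDerivWithinAt)
    (fun s hs hys => ?_) hy0 ht
  have hαs : α (y s) < 0 := hα0 ▸ hαm hys
  linarith [hineq s (Ico_subset_Icc_self hs)]

/-- Comparison lemma: if `α` is a locally Lipschitz extended class-K
function and `y` is differentiable on `[0, T]` with `y' ≥ -α ∘ y` there, then `y(0) ≥ 0`
implies `y(t) ≥ 0` on `[0, T]`. -/
theorem stmt10 (α : ℝ → ℝ) (hαc : Continuous α) (hαm : StrictMono α) (hα0 : α 0 = 0)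
    (hαl : LocallyLipschitz α) (T : ℝ) (hT : 0 < T) (y y' : ℝ → ℝ)
    (hderiv : ∀ t ∈ Set.Icc (0 : ℝ) T, HasDerivAt y (y' t) t)
    (hineq : ∀ t ∈ Set.Icc (0 : ℝ) T, -α (y t) ≤ y' t)
    (hy0 : 0 ≤ y 0) :
    ∀ t ∈ Set.Icc (0 : ℝ) T, 0 ≤ y t :=
  stmt10_general α hαm hα0 T y y' hderiv hineq hy0
end

section
/- Let F : ℝⁿ → 2^{ℝⁿ} be a set-valued map, let h : ℝⁿ → ℝ be continuously differentiable, and let α : ℝ → ℝ be a locally Lipschitz extended class-K function (continuous, strictly increasing, α(0) = 0). Assume that for every x′ ∈ ℝⁿ and every v ∈ F(x′), ∇h(x′)ᵀ v ≥ −α(h(x′)). Then for every T > 0 and every differentiable trajectory x : [0, T] → ℝⁿ satisfying the differential inclusion ẋ(t) ∈ F(x(t)) for all t ∈ [0, T], the condition h(x(0)) ≥ 0 implies h(x(t)) ≥ 0 for all t ∈ [0, T]; i.e. the set C = {x′ ∈ ℝⁿ : h(x′) ≥ 0} is (strongly) forward invariant along such trajectories. -/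
/-! Along a solution, `z = h ∘ x` has derivative `∇h(x)ᵀ ẋ ≥ -α(z)`, which is positive wherever
`z < 0` since `α` is strictly increasing with `α 0 = 0`. If `z` became negative at some `t₁`, take
the last time `s ≤ t₁` with `z s ≥ 0`; by the mean value theorem `z t₁ - z s` is a positive
multiple of `z'` at a point of `(s, t₁)`, where `z < 0`, so `z t₁ > z s ≥ 0`. -/

open Set

section

variable {z z' : ℝ → ℝ} {a b : ℝ}

theorem exists_nonneg_forall_Ioc_neg (hab : a ≤ b) (hz : ContinuousOn z (Icc a b))
    (ha : 0 ≤ z a) (hb : z b < 0) : ∃ s ∈ Ico a b, 0 ≤ z s ∧ ∀ t ∈ Ioc s b, z t < 0 := by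
  set S := Icc a b ∩ z ⁻¹' Ici 0
  have hS : IsCompact S :=
    isCompact_Icc.of_isClosed_subset (hz.preimage_isClosed_of_isClosed isClosed_Icc isClosed_Ici)
      inter_subset_left
  obtain ⟨s, ⟨⟨has, hsb⟩, hzs⟩, hs_max⟩ := hS.exists_isGreatest ⟨a, ⟨le_rfl, hab⟩, ha⟩
  refine ⟨s, ⟨has, lt_of_le_of_ne hsb ?_⟩, hzs, fun t ⟨hst, htb⟩ => ?_⟩
  · rintro rfl
    exact (not_le.mpr hb) hzs
  · by_contra! hzt
    exact (not_le.mpr hst) (hs_max ⟨⟨has.trans hst.le, htb⟩, hzt⟩)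

theorem nonneg_of_hasDerivAt_pos_of_neg (hz : ContinuousOn z (Icc a b))
    (hderiv : ∀ t ∈ Ioo a b, HasDerivAt z (z' t) t)
    (hpos : ∀ t ∈ Ioo a b, z t < 0 → 0 < z' t) (ha : 0 ≤ z a) :
    ∀ t ∈ Icc a b, 0 ≤ z t := by
  intro t₁ ht₁
  by_contra! hzt₁
  obtain ⟨s, ⟨has, hst₁⟩, hzs, hneg⟩ :=
    exists_nonneg_forall_Ioc_neg ht₁.1 (hz.mono (Icc_subset_Icc_right ht₁.2)) ha hzt₁
  have hsub : Icc s t₁ ⊆ Icc a b := Icc_subset_Icc has ht₁.2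
  obtain ⟨c, hc, hslope⟩ := exists_hasDerivAt_eq_slope z z' hst₁ (hz.mono hsub)
    fun t ht => hderiv t ⟨has.trans_lt ht.1, ht.2.trans_le ht₁.2⟩
  have hzc' : 0 < z' c :=
    hpos c ⟨has.trans_lt hc.1, hc.2.trans_le ht₁.2⟩ (hneg c ⟨hc.1, hc.2.le⟩)
  rw [hslope, div_pos_iff_of_pos_right (sub_pos.mpr hst₁)] at hzc'
  linarith

end

theorem stmt11_general (n : ℕ) (F : (Fin n → ℝ) → Set (Fin n → ℝ))
    (h : (Fin n → ℝ) → ℝ) (hh : ContDiff ℝ 1 h)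
    (α : ℝ → ℝ) (hαm : StrictMono α) (hα0 : α 0 = 0)
    (hbar : ∀ (x' : Fin n → ℝ), ∀ v ∈ F x', -α (h x') ≤ fderiv ℝ h x' v)
    (T : ℝ) (x x' : ℝ → (Fin n → ℝ))
    (hderiv : ∀ t ∈ Set.Icc (0 : ℝ) T, HasDerivAt x (x' t) t)
    (hincl : ∀ t ∈ Set.Icc (0 : ℝ) T, x' t ∈ F (x t))
    (hx0 : 0 ≤ h (x 0)) :
    ∀ t ∈ Set.Icc (0 : ℝ) T, 0 ≤ h (x t) := by
  have hz : ∀ t ∈ Icc 0 T, HasDerivAt (h ∘ x) (fderiv ℝ h (x t) (x' t)) t := fun t ht =>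
    ((hh.differentiable one_ne_zero) (x t)).hasFDerivAt.comp_hasDerivAt t (hderiv t ht)
  refine nonneg_of_hasDerivAt_pos_of_neg (fun t ht => (hz t ht).continuousAt.continuousWithinAt)
    (fun t ht => hz t (Ioo_subset_Icc_self ht)) (fun t ht hzt => ?_) hx0
  have hαneg : α (h (x t)) < 0 := hα0 ▸ hαm hzt
  linarith [hbar (x t) (x' t) (hincl t (Ioo_subset_Icc_self ht))]

/-- Smooth barrier theorem for differential inclusions: if
`∇h(x')ᵀ v ≥ -α(h(x'))` for every `x'` and every `v ∈ F(x')`, then along every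
differentiable solution of `ẋ ∈ F(x)` on `[0, T]`, `h(x(0)) ≥ 0` implies
`h(x(t)) ≥ 0` for all `t ∈ [0, T]`. -/
theorem stmt11 (n : ℕ) (F : (Fin n → ℝ) → Set (Fin n → ℝ))
    (h : (Fin n → ℝ) → ℝ) (hh : ContDiff ℝ 1 h)
    (α : ℝ → ℝ) (hαc : Continuous α) (hαm : StrictMono α) (hα0 : α 0 = 0)
    (hαl : LocallyLipschitz α)
    (hbar : ∀ (x' : Fin n → ℝ), ∀ v ∈ F x', -α (h x') ≤ fderiv ℝ h x' v)
    (T : ℝ) (hT : 0 < T) (x x' : ℝ → (Fin n → ℝ))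
    (hderiv : ∀ t ∈ Set.Icc (0 : ℝ) T, HasDerivAt x (x' t) t)
    (hincl : ∀ t ∈ Set.Icc (0 : ℝ) T, x' t ∈ F (x t))
    (hx0 : 0 ≤ h (x 0)) :
    ∀ t ∈ Set.Icc (0 : ℝ) T, 0 ≤ h (x t) :=
  stmt11_general n F h hh α hαm hα0 hbar T x x' hderiv hincl hx0
end

section
/- Let a¹, a² ∈ ℝ^{n×m} with a¹_{ij} ≤ a²_{ij} for all i, j, let D = {M ∈ ℝ^{n×m} : a¹_{ij} ≤ M_{ij} ≤ a²_{ij} for all i, j}, and let v ∈ ℝⁿ and u ∈ ℝ^m. Let Φ = {φ₁, …, φ_{2^m}} ⊆ ℝ^m be the set of vertices of the m-orthotope vᵀD, i.e. the vectors whose j-th coordinate is either Σ_{i} min(vᵢ a¹_{ij}, vᵢ a²_{ij}) or Σ_{i} max(vᵢ a¹_{ij}, vᵢ a²_{ij}). Then min_{M ∈ D} vᵀ M u exists and equals min_{k ∈ {1,…,2^m}} φₖᵀ u; in particular, for any c ∈ ℝ, vᵀ M u ≥ c holds for every M ∈ D if and only if φₖᵀ u ≥ c for every k ∈ {1,…,2^m}.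 -/
/-!
Since `vᵀ M u = (vᵀ M)ᵀ u`, minimising over `M ∈ D` means minimising the linear form `φ ↦ φᵀ u`
over the image `vᵀ D`. Each entry `vᵢ Mᵢⱼ` ranges over the interval between `vᵢ a¹ᵢⱼ` and
`vᵢ a²ᵢⱼ`, and the entries of `M` are independent, so `vᵀ D` is exactly the box with corners
`lo j = Σᵢ min (vᵢ a¹ᵢⱼ) (vᵢ a²ᵢⱼ)` and `hi j = Σᵢ max (vᵢ a¹ᵢⱼ) (vᵢ a²ᵢⱼ)`. A linear form is
minimised over a box coordinatewise, at the vertex taking `lo j` where `uⱼ ≥ 0` and `hi j` where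
`uⱼ < 0`.
-/

open Set
open scoped Matrix

lemma image_const_mul_Icc_eq_Icc_min_max {a b : ℝ} (hab : a ≤ b) (s : ℝ) :
    (s * ·) '' Icc a b = Icc (min (s * a) (s * b)) (max (s * a) (s * b)) := by
  rw [← uIcc_of_le hab, image_const_mul_uIcc]
  rfl

section Box

variable {κ : Type*} (lo hi u : κ → ℝ)

def boxVertices : Set (κ → ℝ) := {φ | ∀ j, φ j = lo j ∨ φ j = hi j}

lemma boxVertices_subset_Icc (h : lo ≤ hi) : boxVertices lo hi ⊆ Icc lo hi := by
  intro φ hφ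
  constructor <;> intro j <;> rcases hφ j with hj | hj <;> simp [hj, h j]

noncomputable def boxMinimizer : κ → ℝ := fun j => if 0 ≤ u j then lo j else hi j

lemma boxMinimizer_mem_boxVertices : boxMinimizer lo hi u ∈ boxVertices lo hi := by
  intro j
  unfold boxMinimizer
  split_ifs <;> simp

lemma boxMinimizer_dotProduct_le [Fintype κ] {x : κ → ℝ} (hx : x ∈ Icc lo hi) :
    boxMinimizer lo hi u ⬝ᵥ u ≤ x ⬝ᵥ u := by
  refine Finset.sum_le_sum fun j _ => ?_
  unfold boxMinimizer
  split_ifs with hu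
  · exact mul_le_mul_of_nonneg_right (hx.1 j) hu
  · exact mul_le_mul_of_nonpos_right (hx.2 j) (not_le.mp hu).le

end Box

namespace Matrix

variable {ι κ : Type*} [Fintype ι] (v : ι → ℝ) (a₁ a₂ : Matrix ι κ ℝ)

def intervalMatrices : Set (Matrix ι κ ℝ) := {M | ∀ i j, a₁ i j ≤ M i j ∧ M i j ≤ a₂ i j}

def vecMulLower : κ → ℝ := fun j => ∑ i, min (v i * a₁ i j) (v i * a₂ i j)

def vecMulUpper : κ → ℝ := fun j => ∑ i, max (v i * a₁ i j) (v i * a₂ i j)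

lemma vecMulLower_le_vecMulUpper : vecMulLower v a₁ a₂ ≤ vecMulUpper v a₁ a₂ :=
  fun _ => Finset.sum_le_sum fun _ _ => min_le_max

variable {v a₁ a₂}

lemma vecMul_mem_Icc {M : Matrix ι κ ℝ} (hM : M ∈ intervalMatrices a₁ a₂) :
    v ᵥ* M ∈ Icc (vecMulLower v a₁ a₂) (vecMulUpper v a₁ a₂) := by
  have hentry : ∀ i j, v i * M i j ∈ Icc (min (v i * a₁ i j) (v i * a₂ i j))
      (max (v i * a₁ i j) (v i * a₂ i j)) := fun i j => by
    rw [← image_const_mul_Icc_eq_Icc_min_max ((hM i j).1.trans (hM i j).2)]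
    exact mem_image_of_mem _ (hM i j)
  exact ⟨fun j => Finset.sum_le_sum fun i _ => (hentry i j).1,
    fun j => Finset.sum_le_sum fun i _ => (hentry i j).2⟩

lemma exists_mem_intervalMatrices_vecMul_eq (hle : ∀ i j, a₁ i j ≤ a₂ i j) {φ : κ → ℝ}
    (hφ : φ ∈ boxVertices (vecMulLower v a₁ a₂) (vecMulUpper v a₁ a₂)) :
    ∃ M ∈ intervalMatrices a₁ a₂, v ᵥ* M = φ := by
  have hendpoints : ∀ i j, min (v i * a₁ i j) (v i * a₂ i j) ∈ (v i * ·) '' Icc (a₁ i j) (a₂ i j)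
      ∧ max (v i * a₁ i j) (v i * a₂ i j) ∈ (v i * ·) '' Icc (a₁ i j) (a₂ i j) := fun i j => by
    rw [image_const_mul_Icc_eq_Icc_min_max (hle i j)]
    exact ⟨left_mem_Icc.mpr min_le_max, right_mem_Icc.mpr min_le_max⟩
  choose xlo hxlo hvxlo using fun i j => (hendpoints i j).1
  choose xhi hxhi hvxhi using fun i j => (hendpoints i j).2
  classical
  let M : Matrix ι κ ℝ := of fun i j => if φ j = vecMulLower v a₁ a₂ j then xlo i j else xhi i j
  refine ⟨M, fun i j => ?_, funext fun j => ?_⟩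
  · simp only [M, of_apply]
    split_ifs
    exacts [hxlo i j, hxhi i j]
  · simp only [vecMul, dotProduct, M, of_apply]
    split_ifs with hj
    · simp only [hvxlo, hj, vecMulLower]
    · simp only [hvxhi, vecMulUpper, (hφ j).resolve_left hj]

end Matrix

open Matrix

/-- (Proposition 2 of the paper, pointwise.) For an interval matrix
`D = {M : a¹ᵢⱼ ≤ Mᵢⱼ ≤ a²ᵢⱼ}`, the minimum of `vᵀ M u` over `M ∈ D` exists and equals the
minimum of `φᵀu` over the vertices `φ` of the m-orthotope `vᵀD`; in particular
`vᵀ M u ≥ c` for all `M ∈ D` iff `φᵀ u ≥ c` for all vertices `φ`. -/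
theorem stmt14 (n m : ℕ) (a₁ a₂ : Matrix (Fin n) (Fin m) ℝ)
    (hle : ∀ i j, a₁ i j ≤ a₂ i j) (v : Fin n → ℝ) (u : Fin m → ℝ)
    (D : Set (Matrix (Fin n) (Fin m) ℝ))
    (hD : D = {M | ∀ i j, a₁ i j ≤ M i j ∧ M i j ≤ a₂ i j})
    (Φ : Set (Fin m → ℝ))
    (hΦ : Φ = {φ | ∀ j, φ j = (∑ i, min (v i * a₁ i j) (v i * a₂ i j)) ∨
                    φ j = (∑ i, max (v i * a₁ i j) (v i * a₂ i j))}) :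
    ∃ φ₀ ∈ Φ,
      (∀ M ∈ D, φ₀ ⬝ᵥ u ≤ v ⬝ᵥ (M *ᵥ u)) ∧
      (∃ M ∈ D, v ⬝ᵥ (M *ᵥ u) = φ₀ ⬝ᵥ u) ∧
      (∀ φ ∈ Φ, φ₀ ⬝ᵥ u ≤ φ ⬝ᵥ u) ∧
      (∀ c : ℝ, (∀ M ∈ D, c ≤ v ⬝ᵥ (M *ᵥ u)) ↔ (∀ φ ∈ Φ, c ≤ φ ⬝ᵥ u)) := by
  change D = intervalMatrices a₁ a₂ at hD
  change Φ = boxVertices (vecMulLower v a₁ a₂) (vecMulUpper v a₁ a₂) at hΦ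
  subst hD hΦ
  set φ₀ := boxMinimizer (vecMulLower v a₁ a₂) (vecMulUpper v a₁ a₂) u
  have hφ₀ := boxMinimizer_mem_boxVertices (vecMulLower v a₁ a₂) (vecMulUpper v a₁ a₂) u
  have hmin : ∀ M ∈ intervalMatrices a₁ a₂, φ₀ ⬝ᵥ u ≤ v ⬝ᵥ (M *ᵥ u) := fun M hM => by
    rw [dotProduct_mulVec]
    exact boxMinimizer_dotProduct_le _ _ u (vecMul_mem_Icc hM)
  have hvertex : ∀ φ ∈ boxVertices (vecMulLower v a₁ a₂) (vecMulUpper v a₁ a₂),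
      φ₀ ⬝ᵥ u ≤ φ ⬝ᵥ u := fun φ hφ =>
    boxMinimizer_dotProduct_le _ _ u
      (boxVertices_subset_Icc _ _ (vecMulLower_le_vecMulUpper v a₁ a₂) hφ)
  obtain ⟨M₀, hM₀, hM₀φ₀⟩ := exists_mem_intervalMatrices_vecMul_eq hle hφ₀
  have hattained : v ⬝ᵥ (M₀ *ᵥ u) = φ₀ ⬝ᵥ u := by rw [dotProduct_mulVec, hM₀φ₀]
  refine ⟨φ₀, hφ₀, hmin, ⟨M₀, hM₀, hattained⟩, hvertex, fun c => ⟨?_, ?_⟩⟩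
  · exact fun h φ hφ => (hattained ▸ h M₀ hM₀).trans (hvertex φ hφ)
  · exact fun h M hM => (h φ₀ hφ₀).trans (hmin M hM)
end
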